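/- Let S' ⊆ S be a set of generators for the observation table. Then S' is minimal (i.e., no proper subset of S' is a set of generators) if and only if there are no s ∈ S' and U ∈ T(S' \ {s}) such that row_t♯(U) = row_t(s). In particular, the algorithm that repeatedly removes from S' any element s for which such a U exists terminates with a minimal set of generators. -/

import Mathlib

/-!
If `row_t(s) = row_t♯(U)` with `U ∈ T(S' \ {s})`, substituting `U` for `s` in a term of `T(S')`
(the Kleisli composite `μ ∘ T k`) does not change its row, because `row_t♯` is the free
extension into an algebra; so a removable `s` leaves the smaller generating set `S' \ {s}`.
Conversely, supersets of generating sets generate, so a generating proper subset of `S'` that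
misses `s` makes `s` removable. Minimal generating subsets exist because `S` is finite.
-/

/-- A monad on the category of sets, given by an endofunctor `T` with unit `pure` (η)
and multiplication `mult` (μ), satisfying functoriality, naturality and the monad laws. -/
structure SetMonad where
  T : Type → Type
  map : {X Y : Type} → (X → Y) → T X → T Y
  pure : {X : Type} → X → T X
  mult : {X : Type} → T (T X) → T X
  map_id : ∀ {X : Type} (t : T X), map id t = t
  map_comp : ∀ {X Y Z : Type} (g : Y → Z) (f : X → Y) (t : T X),
    map (g ∘ f) t = map g (map f t)
  pure_natural : ∀ {X Y : Type} (f : X → Y) (x : X), map f (pure x) = pure (f x)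
  mult_natural : ∀ {X Y : Type} (f : X → Y) (t : T (T X)),
    map f (mult t) = mult (map (map f) t)
  mult_pure : ∀ {X : Type} (t : T X), mult (pure t) = t
  mult_map_pure : ∀ {X : Type} (t : T X), mult (map pure t) = t
  mult_assoc : ∀ {X : Type} (t : T (T (T X))), mult (mult t) = mult (map mult t)

/-- An Eilenberg-Moore algebra `(carrier, str)` for the monad `M`. -/
structure AlgOver (M : SetMonad) where
  carrier : Type
  str : M.T carrier → carrier
  str_pure : ∀ x, str (M.pure x) = x
  str_mult : ∀ t, str (M.mult t) = str (M.map str t)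

/-- `f` is a `T`-algebra homomorphism from `X` to `Y`: `f ∘ h = k ∘ T f`. -/
def IsHom (M : SetMonad) (X Y : AlgOver M) (f : X.carrier → Y.carrier) : Prop :=
  ∀ t : M.T X.carrier, f (X.str t) = Y.str (M.map f t)

/-- The free `T`-algebra `(T U, μ_U)` on a set `U`. -/
def freeAlg (M : SetMonad) (U : Type) : AlgOver M where
  carrier := M.T U
  str := M.mult
  str_pure := M.mult_pure
  str_mult := M.mult_assoc

/-- The free `T`-extension `g♯ = v ∘ T g : T U → V` of a function `g : U → V`
into a `T`-algebra `(V, v)`. -/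
def extAlg (M : SetMonad) {U : Type} (V : AlgOver M) (g : U → V.carrier) :
    M.T U → V.carrier :=
  fun t => V.str (M.map g t)

/-- The pointwise `T`-algebra structure on `V^A` for a `T`-algebra `V`. -/
def powAlg (M : SetMonad) (A : Type) (V : AlgOver M) : AlgOver M where
  carrier := A → V.carrier
  str := fun t a => V.str (M.map (fun g => g a) t)
  str_pure := by
    intro x
    funext a
    show V.str (M.map (fun g => g a) (M.pure x)) = x a
    rw [M.pure_natural]
    exact V.str_pure _
  str_mult := by
    intro t
    funext a
    show V.str (M.map (fun g => g a) (M.mult t)) =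
      V.str (M.map (fun g => g a) (M.map (fun t a => V.str (M.map (fun g => g a) t)) t))
    rw [M.mult_natural, V.str_mult, ← M.map_comp, ← M.map_comp]
    rfl

/-- The top part of the observation table: `row_t : S → O^E`, `row_t(s)(e) = L(se)`. -/
def rowT (A : Type) {Oc : Type} (L : List A → Oc) (S E : Set (List A)) :
    ↥S → ↥E → Oc :=
  fun s e => L (s.1 ++ e.1)

/-- The bottom part of the observation table: `row_b : S → (O^E)^A`,
`row_b(s)(a)(e) = L(sae)`. -/
def rowB (A : Type) {Oc : Type} (L : List A → Oc) (S E : Set (List A)) :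
    ↥S → A → ↥E → Oc :=
  fun s a e => L (s.1 ++ a :: e.1)

/-- The free `T`-extension `row_t♯ : T(S) → O^E`. -/
def rowTs (M : SetMonad) (A : Type) (O : AlgOver M) (L : List A → O.carrier)
    (S E : Set (List A)) : M.T ↥S → ↥E → O.carrier :=
  extAlg M (powAlg M (↥E) O) (rowT A L S E)

/-- The free `T`-extension `row_b♯ : T(S) → (O^E)^A`. -/
def rowBs (M : SetMonad) (A : Type) (O : AlgOver M) (L : List A → O.carrier)
    (S E : Set (List A)) : M.T ↥S → A → ↥E → O.carrier :=
  extAlg M (powAlg M A (powAlg M (↥E) O)) (rowB A L S E)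

/-- `S'` is a set of generators for the observation table over `(S, E)`. -/
def IsGenSet (M : SetMonad) (A : Type) (O : AlgOver M) (L : List A → O.carrier)
    (S E : Set (List A)) (S' : Set (List A)) (hsub : S' ⊆ S) : Prop :=
  ∀ t : ↥S, ∃ U : M.T ↥S',
    rowT A L S E t = rowTs M A O L S E (M.map (Set.inclusion hsub) U)

section FreeExtension

variable (M : SetMonad) {U W : Type} (V : AlgOver M) (g : U → V.carrier)

theorem extAlg_pure (x : U) : extAlg M V g (M.pure x) = g x := by
  rw [extAlg, M.pure_natural, V.str_pure]

theorem extAlg_map (j : W → U) (t : M.T W) :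
    extAlg M V g (M.map j t) = extAlg M V (g ∘ j) t := by
  rw [extAlg, extAlg, M.map_comp]

theorem extAlg_mult_map (k : W → M.T U) (t : M.T W) :
    extAlg M V g (M.mult (M.map k t)) = extAlg M V (extAlg M V g ∘ k) t := by
  rw [extAlg, M.mult_natural, V.str_mult, ← M.map_comp, ← M.map_comp]
  rfl

end FreeExtension

theorem Set.Finite.exists_subset_minimal {α : Type*} {s : Set α} (hs : s.Finite)
    {P : Set α → Prop} (hP : P s) : ∃ t ⊆ s, Minimal P t := by
  have hfin : {t | t ⊆ s ∧ P t}.Finite := hs.finite_subsets.subset fun _ ht => ht.1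
  obtain ⟨t, hts, hmin⟩ := hfin.exists_le_minimal ⟨subset_rfl, hP⟩
  exact ⟨t, hts, hmin.1.2, fun u hu hut => hmin.2 ⟨hut.trans hts, hu⟩ hut⟩

section ObservationTable

variable {M : SetMonad} {A : Type} {O : AlgOver M} {L : List A → O.carrier}
  {S E : Set (List A)}

theorem rowTs_map_inclusion {S' : Set (List A)} (hsub : S' ⊆ S) (U : M.T ↥S') :
    rowTs M A O L S E (M.map (Set.inclusion hsub) U) =
      extAlg M (powAlg M (↥E) O) (rowT A L S E ∘ Set.inclusion hsub) U :=
  extAlg_map M _ _ _ _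

theorem IsGenSet.mono {S₁ S₂ : Set (List A)} {h₁ : S₁ ⊆ S} (hgen : IsGenSet M A O L S E S₁ h₁)
    (h₁₂ : S₁ ⊆ S₂) (h₂ : S₂ ⊆ S) : IsGenSet M A O L S E S₂ h₂ := by
  intro t
  obtain ⟨U, hU⟩ := hgen t
  exact ⟨M.map (Set.inclusion h₁₂) U, by rw [hU, ← M.map_comp]; rfl⟩

theorem IsGenSet.diff_singleton {S' : Set (List A)} {hsub : S' ⊆ S}
    (hgen : IsGenSet M A O L S E S' hsub) {s : List A} (hs : s ∈ S') (U : M.T ↥(S' \ {s}))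
    (hU : rowTs M A O L S E (M.map (Set.inclusion (Set.sdiff_subset.trans hsub)) U) =
      rowT A L S E ⟨s, hsub hs⟩) :
    IsGenSet M A O L S E (S' \ {s}) (Set.sdiff_subset.trans hsub) := by
  classical
  let expand : ↥S' → M.T ↥(S' \ {s}) := fun x =>
    if h : x.1 = s then U else M.pure ⟨x.1, x.2, h⟩
  have hexpand : extAlg M (powAlg M (↥E) O)
      (rowT A L S E ∘ Set.inclusion (Set.sdiff_subset.trans hsub)) ∘ expand =
      rowT A L S E ∘ Set.inclusion hsub := by
    funext x
    by_cases h : x.1 = s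
    · obtain ⟨x, hx⟩ := x
      subst h
      simp only [Function.comp_apply, expand, dif_pos, ← hU, rowTs_map_inclusion]
    · simp only [Function.comp_apply, expand, dif_neg h, extAlg_pure]
      rfl
  intro t
  obtain ⟨V, hV⟩ := hgen t
  refine ⟨M.mult (M.map expand V), ?_⟩
  rw [rowTs_map_inclusion] at hV ⊢
  rw [extAlg_mult_map, hexpand]
  exact hV

theorem IsGenSet.minimal_iff_not_exists_removable {S' : Set (List A)} {hsub : S' ⊆ S}
    (hgen : IsGenSet M A O L S E S' hsub) :
    (∀ (S'' : Set (List A)) (h2 : S'' ⊆ S'), S'' ≠ S' →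
        ¬ IsGenSet M A O L S E S'' (h2.trans hsub)) ↔
      ¬ ∃ (s : List A) (hs : s ∈ S') (U : M.T ↥(S' \ {s})),
        rowTs M A O L S E (M.map (Set.inclusion (Set.sdiff_subset.trans hsub)) U) =
          rowT A L S E ⟨s, hsub hs⟩ := by
  constructor
  · rintro hmin ⟨s, hs, U, hU⟩
    have hne : S' \ {s} ≠ S' := fun h => (h.symm ▸ hs : s ∈ S' \ {s}).2 rfl
    exact hmin _ Set.sdiff_subset hne (hgen.diff_singleton hs U hU)
  · rintro hno S'' h2 hne hgen''
    obtain ⟨s, hs, hns⟩ := Set.exists_of_ssubset (h2.ssubset_of_ne hne)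
    have hsub'' : S'' ⊆ S' \ {s} := fun x hx => ⟨h2 hx, fun h => hns (h ▸ hx)⟩
    obtain ⟨U, hU⟩ := hgen''.mono hsub'' (Set.sdiff_subset.trans hsub) ⟨s, hsub hs⟩
    exact hno ⟨s, hs, U, hU.symm⟩

end ObservationTable

theorem stmt14_general (M : SetMonad) (A : Type) (O : AlgOver M)
    (L : List A → O.carrier) (S E : Set (List A)) (hSfin : S.Finite)
    (S' : Set (List A)) (hsub : S' ⊆ S)
    (hgen : IsGenSet M A O L S E S' hsub) :
    ((∀ (S'' : Set (List A)) (h2 : S'' ⊆ S'), S'' ≠ S' →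
        ¬ IsGenSet M A O L S E S'' (h2.trans hsub)) ↔
      ¬ ∃ (s : List A) (hs : s ∈ S') (U : M.T ↥(S' \ {s})),
        rowTs M A O L S E (M.map (Set.inclusion (Set.diff_subset.trans hsub)) U) =
          rowT A L S E ⟨s, hsub hs⟩) ∧
    ∃ (S'' : Set (List A)) (h2 : S'' ⊆ S'),
      IsGenSet M A O L S E S'' (h2.trans hsub) ∧
      ∀ (S₃ : Set (List A)) (h3 : S₃ ⊆ S''), S₃ ≠ S'' →
        ¬ IsGenSet M A O L S E S₃ ((h3.trans h2).trans hsub) := by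
  refine ⟨hgen.minimal_iff_not_exists_removable, ?_⟩
  obtain ⟨S'', h2, hmin⟩ := (hSfin.subset hsub).exists_subset_minimal
    (P := fun X => ∃ h : X ⊆ S, IsGenSet M A O L S E X h) ⟨hsub, hgen⟩
  exact ⟨S'', h2, hmin.prop.2, fun S₃ h3 hne hgen₃ => hne (hmin.eq_of_subset ⟨_, hgen₃⟩ h3)⟩

/-- a set of generators `S'` is minimal (no proper subset generates) iff
no `s ∈ S'` has its row decomposable over `T(S' \ {s})`; moreover every set of
generators contains a minimal one (so the removal algorithm terminates with a minimal
set of generators). -/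
theorem stmt14 (M : SetMonad) (A : Type) [Finite A] (O : AlgOver M)
    (L : List A → O.carrier) (S E : Set (List A)) (hSfin : S.Finite)
    (hEfin : E.Finite) (hSe : [] ∈ S) (hEe : [] ∈ E)
    (S' : Set (List A)) (hsub : S' ⊆ S)
    (hgen : IsGenSet M A O L S E S' hsub) :
    ((∀ (S'' : Set (List A)) (h2 : S'' ⊆ S'), S'' ≠ S' →
        ¬ IsGenSet M A O L S E S'' (h2.trans hsub)) ↔
      ¬ ∃ (s : List A) (hs : s ∈ S') (U : M.T ↥(S' \ {s})),
        rowTs M A O L S E (M.map (Set.inclusion (Set.diff_subset.trans hsub)) U) =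
          rowT A L S E ⟨s, hsub hs⟩) ∧
    ∃ (S'' : Set (List A)) (h2 : S'' ⊆ S'),
      IsGenSet M A O L S E S'' (h2.trans hsub) ∧
      ∀ (S₃ : Set (List A)) (h3 : S₃ ⊆ S''), S₃ ≠ S'' →
        ¬ IsGenSet M A O L S E S₃ ((h3.trans h2).trans hsub) :=
  stmt14_general M A O L S E hSfin S' hsub hgen
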